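/- Let G be a group such that x ⊗ x = 1_⊗ for all x ∈ G. Then the derived subgroup of R_2^⊗(G) is contained in Z_2^⊗(G); in particular, for all g, h ∈ R_2^⊗(G), the commutator [g, h] = g⁻¹h⁻¹gh lies in Z_2^⊗(G). -/

import Mathlib

/-!
Non-abelian tensor square `G ⊗ G`, constructed as the presented group on
symbols `g ⊗ h` with the defining relations
`g*g' ⊗ h = (g^{g'} ⊗ h^{g'}) * (g' ⊗ h)` and
`g ⊗ h*h' = (g ⊗ h') * (g^{h'} ⊗ h^{h'})`, where `a ^ b = b⁻¹ * a * b`.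
-/

variable {G : Type*} [Group G]

/-- Defining relations of the non-abelian tensor square `G ⊗ G`. -/
def tensorRels (G : Type*) [Group G] : Set (FreeGroup (G × G)) :=
  {r | (∃ g g' h : G,
      r = FreeGroup.of (g * g', h) *
        (FreeGroup.of (g'⁻¹ * g * g', g'⁻¹ * h * g') * FreeGroup.of (g', h))⁻¹) ∨
    (∃ g h h' : G,
      r = FreeGroup.of (g, h * h') *
        (FreeGroup.of (g, h') * FreeGroup.of (h'⁻¹ * g * h', h'⁻¹ * h * h'))⁻¹)}

/-- The non-abelian tensor square `G ⊗ G`. -/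
abbrev TensorSquare (G : Type*) [Group G] := PresentedGroup (tensorRels G)

/-- The tensor `g ⊗ h` as an element of `G ⊗ G`. -/
def tmul (g h : G) : TensorSquare G := PresentedGroup.of (g, h)

theorem tensorRels_eq_one {r : FreeGroup (G × G)} (hr : r ∈ tensorRels G) :
    PresentedGroup.mk (tensorRels G) r = 1 :=
  (QuotientGroup.eq_one_iff r).mpr (Subgroup.subset_normalClosure hr)

/-- The first defining relation of `G ⊗ G`. -/
theorem tmul_rel₁ (g g' h : G) :
    tmul (g * g') h = tmul (g'⁻¹ * g * g') (g'⁻¹ * h * g') * tmul g' h := by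
  have h1 := tensorRels_eq_one (G := G) (Or.inl ⟨g, g', h, rfl⟩)
  rw [map_mul, map_inv, map_mul, mul_inv_eq_one] at h1
  exact h1

/-- The second defining relation of `G ⊗ G`. -/
theorem tmul_rel₂ (g h h' : G) :
    tmul g (h * h') = tmul g h' * tmul (h'⁻¹ * g * h') (h'⁻¹ * h * h') := by
  have h1 := tensorRels_eq_one (G := G) (Or.inr ⟨g, h, h', rfl⟩)
  rw [map_mul, map_inv, map_mul, mul_inv_eq_one] at h1
  exact h1

/-- The action of `x : G` on `G ⊗ G`, determined by `(g ⊗ h) ^ x = (x⁻¹*g*x) ⊗ (x⁻¹*h*x)`. -/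
def tensorAct (x : G) : TensorSquare G →* TensorSquare G :=
  PresentedGroup.toGroup
    (f := fun p : G × G => tmul (x⁻¹ * p.1 * x) (x⁻¹ * p.2 * x))
    (by
      rintro r (⟨g, g', h, rfl⟩ | ⟨g, h, h', rfl⟩) <;>
        simp only [map_mul, map_inv, FreeGroup.lift_apply_of, mul_inv_eq_one]
      · have := tmul_rel₁ (x⁻¹ * g * x) (x⁻¹ * g' * x) (x⁻¹ * h * x)
        convert this using 2 <;> group
      · have := tmul_rel₂ (x⁻¹ * g * x) (x⁻¹ * h * x) (x⁻¹ * h' * x)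
        convert this using 2 <;> group)

@[simp] theorem tensorAct_tmul (x g h : G) :
    tensorAct x (tmul g h) = tmul (x⁻¹ * g * x) (x⁻¹ * h * x) :=
  PresentedGroup.toGroup.of _

/-- An automorphism `α` of `G` is tensor commuting if `g ⊗ α g = 1` for all `g`. -/
def IsTensorCommuting (α : G ≃* G) : Prop := ∀ g : G, tmul g (α g) = 1

/-- An automorphism `α` of `G` is tensor central if `[x, α] = x⁻¹ * α x` lies in the
tensor center of `G`, i.e. `(x⁻¹ * α x) ⊗ y = 1` for all `x y`. -/
def IsTensorCentral (α : G ≃* G) : Prop := ∀ x y : G, tmul (x⁻¹ * α x) y = 1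

/-- The inner automorphism `T_g : x ↦ x ^ g = g⁻¹ * x * g` of `G` induced by `g`. -/
def innerAut (g : G) : G ≃* G := MulAut.conj g⁻¹

/-!
Write `[a, b] = a⁻¹b⁻¹ab` and `[a, b, c] = [[a, b], c]`. The commutator map `G ⊗ G → G` turns
`[r, x] ⊗ x = 1` into `[r, x, x] = 1`, so `R₂⊗(G)` is a normal subgroup of right `2`-Engel
elements. Kappe's calculus for such elements (their normal closures are abelian, and
`[r, x, y] = [r, y, x]⁻¹`, `[r, [x, y]] = [r, x, y]²`) shows that for `a, b ∈ R₂⊗(G)` every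
`E = [a, b, z]` is central in `G` with `E³ = 1`. Hence `ψ = [a, b, z] ⊗ z'` is central and
`G`-invariant in `G ⊗ G` with `ψ³ = 1`. Expanding `[a, b] ⊗ zz'` in two ways gives
`[a, b] ⊗ [z, z'] = ψ²`. Linearizing `[r, xy] ⊗ xy = 1` for `r = [a, z]` gives
`[a, z, z'] ⊗ b = ψ`, hence `[a, [z, z']] ⊗ b = ψ²` because `[a, [z, z']] = [a, z, z']²`; the
linearized identity for `r = a`, `x = b`, `y = [z, z']` then reads `ψ⁴ = 1`. So `ψ = 1`,
i.e. `[a, b] ∈ Z₂⊗(G)`.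
-/

/-- The paper's `[a, b]`; Mathlib's `⁅a, b⁆` is `a * b * a⁻¹ * b⁻¹` instead. -/
def rcomm (a b : G) : G := a⁻¹ * b⁻¹ * a * b

theorem rcomm_eq_one_iff {a b : G} : rcomm a b = 1 ↔ Commute a b := by
  rw [rcomm, show a⁻¹ * b⁻¹ * a * b = (b * a)⁻¹ * (a * b) by group, inv_mul_eq_one,
    eq_comm]
  rfl

theorem inv_rcomm (a b : G) : (rcomm a b)⁻¹ = rcomm b a := by
  simp only [rcomm]; group

theorem rcomm_eq_inv_mul_conj (a b : G) : rcomm a b = a⁻¹ * (b⁻¹ * a * b) := by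
  simp only [rcomm]; group

theorem rcomm_mul_left (a a' b : G) :
    rcomm (a * a') b = (a'⁻¹ * rcomm a b * a') * rcomm a' b := by
  simp only [rcomm]; group

theorem rcomm_mul_right (a b b' : G) :
    rcomm a (b * b') = rcomm a b' * (b'⁻¹ * rcomm a b * b') := by
  simp only [rcomm]; group

theorem rcomm_inv_left {u g : G} (h : Commute u (rcomm u g)) :
    rcomm u⁻¹ g = (rcomm u g)⁻¹ := by
  have hconj : Commute u (g⁻¹ * u * g) := by
    simpa only [rcomm, mul_assoc, mul_inv_cancel_left] using (Commute.refl u).mul_right h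
  rw [show rcomm u⁻¹ g = u * (g⁻¹ * u * g)⁻¹ by simp only [rcomm]; group,
    hconj.inv_right.eq]
  simp only [rcomm]; group

theorem rcomm_inv_right {u g : G} (h : Commute (rcomm u g) g) :
    rcomm u g⁻¹ = (rcomm u g)⁻¹ := by
  rw [show rcomm u g⁻¹ = g * (rcomm u g)⁻¹ * g⁻¹ by simp only [rcomm]; group]
  exact h.symm.inv_right.mul_inv_cancel

theorem rcomm_mem {N : Subgroup G} [hN : N.Normal] {g : G} (hg : g ∈ N) (w : G) :
    rcomm g w ∈ N := by
  rw [rcomm_eq_inv_mul_conj]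
  exact N.mul_mem (N.inv_mem hg) (hN.conj_mem' _ hg w)

theorem rcomm_mem_normalClosure (r w : G) : rcomm r w ∈ Subgroup.normalClosure {r} :=
  rcomm_mem (Subgroup.subset_normalClosure (Set.mem_singleton r)) w

theorem tensorSquare_hom_ext {H : Type*} [Group H] {f₁ f₂ : TensorSquare G →* H}
    (h : ∀ g h', f₁ (tmul g h') = f₂ (tmul g h')) : f₁ = f₂ :=
  PresentedGroup.ext fun x => h x.1 x.2

theorem tensorAct_tensorAct (x y : G) (t : TensorSquare G) :
    tensorAct x (tensorAct y t) = tensorAct (y * x) t := by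
  suffices (tensorAct x).comp (tensorAct y) = tensorAct (y * x) from DFunLike.congr_fun this t
  refine tensorSquare_hom_ext fun g h => ?_
  simp only [MonoidHom.comp_apply, tensorAct_tmul]
  congr 1 <;> group

theorem tensorAct_of_forall_commute {z : G} (hz : ∀ w, Commute z w) (t : TensorSquare G) :
    tensorAct z t = t := by
  suffices tensorAct z = MonoidHom.id (TensorSquare G) from DFunLike.congr_fun this t
  refine tensorSquare_hom_ext fun g h => ?_
  rw [tensorAct_tmul, (hz g).inv_mul_cancel, (hz h).inv_mul_cancel, MonoidHom.id_apply]

@[simp] theorem tensorAct_one (t : TensorSquare G) : tensorAct 1 t = t :=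
  tensorAct_of_forall_commute (Commute.one_left) t

theorem tensorAct_eq_one_iff {x : G} {t : TensorSquare G} : tensorAct x t = 1 ↔ t = 1 := by
  refine ⟨fun h => ?_, fun h => by rw [h, map_one]⟩
  simpa only [tensorAct_tensorAct, mul_inv_cancel, tensorAct_one, map_one]
    using congrArg (tensorAct x⁻¹) h

theorem tmul_mul_left (g g' h : G) :
    tmul (g * g') h = tensorAct g' (tmul g h) * tmul g' h := by
  rw [tensorAct_tmul]; exact tmul_rel₁ g g' h

theorem tmul_mul_right (g h h' : G) :
    tmul g (h * h') = tmul g h' * tensorAct h' (tmul g h) := by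
  rw [tensorAct_tmul]; exact tmul_rel₂ g h h'

@[simp] theorem tmul_one_left (h : G) : tmul 1 h = 1 := by
  simpa using tmul_mul_left (1 : G) 1 h

@[simp] theorem tmul_one_right (g : G) : tmul g 1 = 1 := by
  simpa using tmul_mul_right g (1 : G) 1

theorem tmul_inv_left (g h : G) : tmul g⁻¹ h = (tensorAct g⁻¹ (tmul g h))⁻¹ := by
  refine eq_inv_of_mul_eq_one_right ?_
  rw [← tmul_mul_left, mul_inv_cancel, tmul_one_left]

theorem tmul_inv_right (g h : G) : tmul g h⁻¹ = (tensorAct h⁻¹ (tmul g h))⁻¹ := by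
  refine eq_inv_of_mul_eq_one_left ?_
  rw [← tmul_mul_right, mul_inv_cancel, tmul_one_right]

/-- Expanding `gg' ⊗ hh'` with the two relations in either order. -/
theorem tmul_mul_tensorAct_tmul (g' h' g h : G) :
    tmul g' h' * tensorAct (g' * h') (tmul g h) = tensorAct (h' * g') (tmul g h) * tmul g' h' := by
  have expand₁ := tmul_mul_right (g * g') h h'
  have expand₂ := tmul_mul_left g g' (h * h')
  rw [tmul_mul_left g g' h', tmul_mul_left g g' h, map_mul, tensorAct_tensorAct] at expand₁
  rw [tmul_mul_right g h h', tmul_mul_right g' h h', map_mul, tensorAct_tensorAct] at expand₂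
  have key := expand₁.symm.trans expand₂
  simp only [mul_assoc, mul_right_inj] at key
  simpa only [← mul_assoc, mul_left_inj] using key

theorem tensorAct_rcomm (g h : G) (t : TensorSquare G) :
    tensorAct (rcomm g h) t = (tmul g h)⁻¹ * t * tmul g h := by
  suffices tensorAct (rcomm g h) = (MulAut.conj (tmul g h)⁻¹).toMonoidHom by
    simp [this, mul_assoc]
  refine tensorSquare_hom_ext fun u v => ?_
  have key := tmul_mul_tensorAct_tmul g h (h * g * u * (h * g)⁻¹) (h * g * v * (h * g)⁻¹)
  simp only [tensorAct_tmul, rcomm] at key ⊢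
  rw [MulEquiv.coe_toMonoidHom, MulAut.conj_apply, inv_inv, mul_assoc (tmul g h)⁻¹,
    eq_inv_mul_iff_mul_eq]
  convert key using 3 <;> group

theorem commute_tmul_of_forall_commute {g h : G} (hgh : ∀ w, Commute (rcomm g h) w)
    (t : TensorSquare G) : Commute (tmul g h) t := by
  have h := tensorAct_rcomm g h t
  rw [tensorAct_of_forall_commute hgh, eq_comm, mul_assoc, inv_mul_eq_iff_eq_mul] at h
  exact h.symm

theorem commute_tmul_of_commute {g h : G} (hgh : Commute g h) (t : TensorSquare G) :
    Commute (tmul g h) t :=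
  commute_tmul_of_forall_commute (fun w => rcomm_eq_one_iff.mpr hgh ▸ Commute.one_left w) t

theorem tmul_inv_left_of_forall_commute {g : G} (hg : ∀ w, Commute g w) (h : G) :
    tmul g⁻¹ h = (tmul g h)⁻¹ := by
  rw [tmul_inv_left, tensorAct_of_forall_commute fun w => (hg w).inv_left]

theorem tmul_pow_left_of_forall_commute {g : G} (hg : ∀ w, Commute g w) (h : G) (n : ℕ) :
    tmul (g ^ n) h = tmul g h ^ n := by
  induction n with
  | zero => simp
  | succ n ih => rw [pow_succ, tmul_mul_left, tensorAct_of_forall_commute hg, ih, pow_succ]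

theorem tmul_mul_rcomm_of_commute {g z z' : G} (hc : Commute (tmul g z) (tmul z z')) :
    tmul g (z * rcomm z z') = tmul g (rcomm z z') * tmul g z := by
  rw [tmul_mul_right, tensorAct_rcomm, hc.symm.inv_mul_cancel]

def rcommHom (G : Type*) [Group G] : TensorSquare G →* G :=
  PresentedGroup.toGroup (f := fun p : G × G => rcomm p.1 p.2) (by
    rintro r (⟨g, g', h, rfl⟩ | ⟨g, h, h', rfl⟩) <;>
      simp only [rcomm, map_mul, map_inv, FreeGroup.lift_apply_of, mul_inv_eq_one] <;> group)

@[simp] theorem rcommHom_tmul (g h : G) : rcommHom G (tmul g h) = rcomm g h :=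
  PresentedGroup.toGroup.of _

def IsRight2Engel (r : G) : Prop := ∀ x, Commute (rcomm r x) x

namespace IsRight2Engel

section

variable {r : G} (hr : IsRight2Engel r)
include hr

theorem rcomm_rcomm_self (x : G) : rcomm (rcomm r x) x = 1 :=
  rcomm_eq_one_iff.mpr (hr x)

theorem commute_rcomm_left (z : G) : Commute (rcomm r z) r := by
  have hzr : Commute (r⁻¹ * rcomm r z * r) (z * r) := by
    rw [show r⁻¹ * rcomm r z * r = rcomm r (z * r) by simp only [rcomm]; group]
    exact hr (z * r)
  have hz : Commute (r⁻¹ * rcomm r z * r) (r⁻¹ * z * r) := by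
    simpa using (hr z).conj r⁻¹
  have key := hzr.mul_right hz.inv_right
  rw [show z * r * (r⁻¹ * z * r)⁻¹ = r by group] at key
  simpa [mul_assoc] using key.conj r

theorem commute_conj (s t : G) : Commute (s * r * s⁻¹) (t * r * t⁻¹) := by
  have hself (z : G) : Commute r (z⁻¹ * r * z) := by
    have key := (Commute.refl r).mul_right (hr.commute_rcomm_left z).symm
    rwa [show r * rcomm r z = z⁻¹ * r * z by simp only [rcomm]; group] at key
  simpa [mul_assoc] using (hself (t⁻¹ * s)).conj s

theorem commute_of_mem_normalClosure {g h : G} (hg : g ∈ Subgroup.normalClosure {r})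
    (hh : h ∈ Subgroup.normalClosure {r}) : Commute g h := by
  have hcomm : ∀ x ∈ Group.conjugatesOfSet {r}, ∀ y ∈ Group.conjugatesOfSet {r},
      x * y = y * x := by
    simp only [Group.mem_conjugatesOfSet_iff, Set.mem_singleton_iff, exists_eq_left, isConj_iff]
    rintro _ ⟨s, rfl⟩ _ ⟨t, rfl⟩
    exact hr.commute_conj s t
  have := Subgroup.isMulCommutative_closure hcomm
  exact congrArg Subtype.val (this.is_comm.comm ⟨g, hg⟩ ⟨h, hh⟩)

theorem conj_rcomm_rcomm (x y : G) :
    x⁻¹ * rcomm (rcomm r x) y * x = (rcomm (rcomm r y) x)⁻¹ := by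
  have hyx : Commute (rcomm r x) (rcomm (rcomm r y) x) :=
    hr.commute_of_mem_normalClosure (rcomm_mem_normalClosure r x)
      (rcomm_mem (rcomm_mem_normalClosure r y) x)
  have h := hr.rcomm_rcomm_self (x * y)
  rw [rcomm_mul_right r x y, rcomm_mul_left, rcomm_mul_right (rcomm r y), hr.rcomm_rcomm_self,
    one_mul, show rcomm (y⁻¹ * rcomm r x * y) (x * y) = y⁻¹ * rcomm (rcomm r x) (y * x) * y by
      simp only [rcomm]; group, rcomm_mul_right (rcomm r x) y x, hr.rcomm_rcomm_self, one_mul] at h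
  refine eq_inv_of_mul_eq_one_right ?_
  nth_rewrite 1 [← hyx.inv_mul_cancel]
  rw [← (conj_eq_one_iff (a := y)).mpr h]
  group

theorem commute_rcomm_rcomm (y x w : G) : Commute (rcomm r y) (rcomm x w) := by
  -- Expand both sides of `conj_rcomm_rcomm x (y * z)`: in the abelian normal closure of `r`
  -- everything cancels except a conjugate of `[[r, y], [x, z⁻¹]]`.
  obtain ⟨z, rfl⟩ : ∃ z, w = z⁻¹ := ⟨w⁻¹, (inv_inv w).symm⟩
  set c := rcomm x z⁻¹
  set q := rcomm (rcomm r z) x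
  set E := rcomm (rcomm r y) x
  set X := z⁻¹ * (c⁻¹ * E⁻¹ * c) * z
  have lhs : x⁻¹ * rcomm (rcomm r x) (y * z) * x = q⁻¹ * X := by
    rw [rcomm_mul_right,
      show x⁻¹ * (rcomm (rcomm r x) z * (z⁻¹ * rcomm (rcomm r x) y * z)) * x =
        x⁻¹ * rcomm (rcomm r x) z * x *
          (z⁻¹ * (c⁻¹ * (x⁻¹ * rcomm (rcomm r x) y * x) * c) * z) by
        simp only [c, rcomm]; group,
      hr.conj_rcomm_rcomm, hr.conj_rcomm_rcomm]
  have rhs : rcomm (rcomm r (y * z)) x =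
      q * (z⁻¹ * (rcomm (rcomm r y) c * (c⁻¹ * E * c)) * z) := by
    have hq : Commute (z⁻¹ * rcomm r y * z) q := hr.commute_of_mem_normalClosure
      (Subgroup.normalClosure_normal.conj_mem' _ (rcomm_mem_normalClosure r y) z)
      (rcomm_mem (rcomm_mem_normalClosure r z) x)
    rw [rcomm_mul_right r y z, rcomm_mul_left, hq.inv_mul_cancel, ← rcomm_mul_right,
      show rcomm (z⁻¹ * rcomm r y * z) x = z⁻¹ * rcomm (rcomm r y) (x * c) * z by
        simp only [c, rcomm]; group]
  have hqX : Commute q X := hr.commute_of_mem_normalClosure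
    (rcomm_mem (rcomm_mem_normalClosure r z) x)
    (Subgroup.normalClosure_normal.conj_mem' _ (Subgroup.normalClosure_normal.conj_mem' _
      (inv_mem (rcomm_mem (rcomm_mem_normalClosure r y) x)) c) z)
  have h := hr.conj_rcomm_rcomm x (y * z)
  rw [lhs, rhs] at h
  have h' : X * q⁻¹ = X * (z⁻¹ * (rcomm (rcomm r y) c)⁻¹ * z) * q⁻¹ := by
    rw [← hqX.inv_left.eq, h]; simp only [X]; group
  rw [mul_left_inj, left_eq_mul] at h'
  rwa [← rcomm_eq_one_iff, ← inv_eq_one, ← conj_eq_one_iff (a := z⁻¹), inv_inv]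

theorem rcomm_rcomm_flip (b y : G) :
    rcomm (rcomm b r) y = (rcomm (rcomm r b) y)⁻¹ := by
  rw [← inv_rcomm r b]
  exact rcomm_inv_left (hr.commute_rcomm_rcomm b (rcomm r b) y)

theorem rcomm_rcomm_comm (hr' : ∀ x w, Commute r (rcomm x w)) (y g : G) :
    rcomm (rcomm r y) g = rcomm (rcomm r g) y := by
  have hconj : Commute (y⁻¹ * r * y) (rcomm r g) := by
    rw [show y⁻¹ * r * y = r * rcomm r y by simp only [rcomm]; group]
    exact (hr' r g).mul_left (hr.commute_rcomm_rcomm y r g)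
  have hmid : rcomm r (y * g * y⁻¹) = rcomm r g := by
    rw [show y * g * y⁻¹ = g * rcomm g y⁻¹ by simp only [rcomm]; group, rcomm_mul_right,
      rcomm_eq_one_iff.mpr (hr' g y⁻¹), one_mul]
    exact (hr.commute_rcomm_rcomm g g y⁻¹).symm.inv_mul_cancel
  rw [rcomm_eq_inv_mul_conj r y, rcomm_mul_left, rcomm_inv_left (hr' r g),
    hconj.inv_right.inv_mul_cancel,
    show rcomm (y⁻¹ * r * y) g = y⁻¹ * rcomm r (y * g * y⁻¹) * y by
      simp only [rcomm]; group, hmid]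
  exact (rcomm_eq_inv_mul_conj _ _).symm

theorem rcomm_rcomm_mul_self_eq_one (hr' : ∀ x w, Commute r (rcomm x w)) {y : G}
    (hry : IsRight2Engel (rcomm r y)) (g : G) :
    rcomm (rcomm r y) g * rcomm (rcomm r y) g = 1 := by
  set w := rcomm r g
  have hwy : y⁻¹ * rcomm w y * y = (rcomm w y)⁻¹ := by
    rw [← hr.rcomm_rcomm_comm hr', hr.conj_rcomm_rcomm, hr.rcomm_rcomm_comm hr']
  have hconj : y⁻¹ * w * y = w * rcomm w y := by simp only [rcomm]; group
  have hw : (y * y)⁻¹ * w * (y * y) = w := calc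
    _ = y⁻¹ * (y⁻¹ * w * y) * y := by group
    _ = y⁻¹ * (w * rcomm w y) * y := by rw [hconj]
    _ = (y⁻¹ * w * y) * (y⁻¹ * rcomm w y * y) := by group
    _ = w := by rw [hconj, hwy]; group
  have hsq : rcomm r (y * y) = rcomm r y * rcomm r y := by
    rw [rcomm_mul_right, (hr y).symm.inv_mul_cancel]
  have hsq' : rcomm (rcomm r (y * y)) g = rcomm (rcomm r y) g * rcomm (rcomm r y) g := by
    rw [hsq, rcomm_mul_left, (hry.commute_rcomm_rcomm g r y).symm.inv_mul_cancel]
  rw [← hsq', hr.rcomm_rcomm_comm hr', rcomm_eq_inv_mul_conj, hw, inv_mul_cancel]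

end

variable {r : G} (hr : IsRight2Engel r) {x : G} (hrx : IsRight2Engel (rcomm r x))
include hr hrx

theorem commute_rcomm_rcomm_self (y : G) : Commute (rcomm (rcomm r x) y) x := by
  rw [← rcomm_eq_one_iff, hrx.rcomm_rcomm_comm (hr.commute_rcomm_rcomm x), hr.rcomm_rcomm_self,
    rcomm_eq_one_iff]
  exact Commute.one_left y

theorem rcomm_rcomm_eq_inv (y : G) : rcomm (rcomm r x) y = (rcomm (rcomm r y) x)⁻¹ := by
  rw [← hr.conj_rcomm_rcomm, (hr.commute_rcomm_rcomm_self hrx y).symm.inv_mul_cancel]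

theorem rcomm_conj_inv (y : G) :
    rcomm r (x⁻¹ * y⁻¹ * x) = x⁻¹ * ((rcomm r y)⁻¹ * rcomm (rcomm r x) y) * x := by
  have hconj : x * r * x⁻¹ = r * (rcomm r x)⁻¹ := by
    rw [← rcomm_inv_right (hr x)]; simp only [rcomm]; group
  have hN : Commute (rcomm r x) (rcomm r y)⁻¹ := (hr.commute_of_mem_normalClosure
    (rcomm_mem_normalClosure r x) (rcomm_mem_normalClosure r y)).inv_right
  rw [show rcomm r (x⁻¹ * y⁻¹ * x) = x⁻¹ * rcomm (x * r * x⁻¹) y⁻¹ * x by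
      simp only [rcomm]; group,
    hconj, rcomm_mul_left, inv_inv, rcomm_inv_right (hr y), hN.mul_inv_cancel,
    rcomm_inv_left (hr.commute_rcomm_rcomm x _ y⁻¹), rcomm_inv_right (hrx y), inv_inv]

theorem conj_mul_rcomm (y : G) :
    (x * y)⁻¹ * rcomm r y * (x * y) = rcomm r y * (rcomm (rcomm r x) y)⁻¹ := by
  have hp : y⁻¹ * (rcomm (rcomm r x) y)⁻¹ * y = (rcomm (rcomm r x) y)⁻¹ :=
    (hrx y).inv_left.symm.inv_mul_cancel
  rw [show (x * y)⁻¹ * rcomm r y * (x * y) = rcomm r y * rcomm (rcomm r y) (x * y) by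
      simp only [rcomm]; group, rcomm_mul_right, hr.rcomm_rcomm_self, one_mul,
    ← inv_inv (rcomm (rcomm r y) x), ← hr.rcomm_rcomm_eq_inv hrx, hp]

theorem rcomm_rcomm_eq_mul_self (y : G) :
    rcomm r (rcomm x y) = rcomm (rcomm r x) y * rcomm (rcomm r x) y := by
  set p := rcomm (rcomm r x) y
  have hp : (x * y)⁻¹ * p * (x * y) = p :=
    ((hr.commute_rcomm_rcomm_self hrx y).mul_right (hrx y)).symm.inv_mul_cancel
  have hq : (x * y)⁻¹ * (rcomm r y)⁻¹ * (x * y) = (rcomm r y * p⁻¹)⁻¹ := by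
    rw [← hr.conj_mul_rcomm hrx]; group
  have hpc : Commute p (rcomm r y) := (hr.commute_rcomm_rcomm y (rcomm r x) y).symm
  rw [show rcomm x y = x⁻¹ * y⁻¹ * x * y from rfl, rcomm_mul_right, hr.rcomm_conj_inv hrx,
    show y⁻¹ * (x⁻¹ * ((rcomm r y)⁻¹ * p) * x) * y
      = (x * y)⁻¹ * (rcomm r y)⁻¹ * (x * y) * ((x * y)⁻¹ * p * (x * y)) by group, hp, hq,
    show rcomm r y * ((rcomm r y * p⁻¹)⁻¹ * p) = rcomm r y * (p * (rcomm r y)⁻¹) * p by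
      group,
    hpc.inv_right.eq]
  group

end IsRight2Engel

section EngelSubgroup

variable {S : Subgroup G} [S.Normal] (hS : ∀ g ∈ S, IsRight2Engel g) {a b : G}
  (ha : a ∈ S) (hb : b ∈ S)
include hS ha hb

theorem rcomm_rcomm_eq_mul_self_flip (y : G) :
    rcomm (rcomm a b) y = rcomm (rcomm b a) y * rcomm (rcomm b a) y := by
  rw [(hS a ha).rcomm_rcomm_eq_inv (hS _ (rcomm_mem ha b)), inv_rcomm,
    (hS b hb).rcomm_rcomm_eq_mul_self (hS _ (rcomm_mem hb a))]

theorem rcomm_rcomm_pow_three (y : G) : rcomm (rcomm a b) y ^ 3 = 1 := by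
  have h := rcomm_rcomm_eq_mul_self_flip hS ha hb y
  rw [(hS a ha).rcomm_rcomm_flip, ← mul_inv_rev, eq_inv_iff_mul_eq_one] at h
  rwa [pow_three]

theorem commute_rcomm_rcomm_of_mem (y z : G) : Commute (rcomm (rcomm a b) y) z := by
  -- Since `E = E⁻¹ * E⁻¹`, `[E, z]` is an involution whose cube is trivial.
  set E := rcomm (rcomm a b) y
  have hab := hS _ (rcomm_mem ha b)
  have hsq : rcomm E z * rcomm E z = 1 :=
    hab.rcomm_rcomm_mul_self_eq_one ((hS a ha).commute_rcomm_rcomm b)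
      (hS _ (rcomm_mem (rcomm_mem ha b) y)) z
  have hflip : rcomm E⁻¹ z = (rcomm E z)⁻¹ :=
    rcomm_inv_left (hab.commute_rcomm_rcomm y E z)
  have hdouble : rcomm E z = rcomm E⁻¹ z * rcomm E⁻¹ z := by
    have hE : E = E⁻¹ * E⁻¹ := by
      rw [← (hS a ha).rcomm_rcomm_flip]; exact rcomm_rcomm_eq_mul_self_flip hS ha hb y
    have hq : Commute E⁻¹ (rcomm E⁻¹ z) := by
      rw [← (hS a ha).rcomm_rcomm_flip]
      exact (hS _ (rcomm_mem hb a)).commute_rcomm_rcomm y _ z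
    nth_rewrite 1 [hE]
    rw [rcomm_mul_left, hq.inv_mul_cancel]
  rw [← rcomm_eq_one_iff, hdouble, hflip, ← mul_inv_rev, hsq, inv_one]

end EngelSubgroup

def IsRightTensor2Engel (r : G) : Prop := ∀ x, tmul (rcomm r x) x = 1

namespace IsRightTensor2Engel

variable {r : G} (hr : IsRightTensor2Engel r)
include hr

theorem isRight2Engel : IsRight2Engel r := fun x => by
  simpa only [rcommHom_tmul, map_one, rcomm_eq_one_iff] using congrArg (rcommHom G) (hr x)

theorem conj (z : G) : IsRightTensor2Engel (z⁻¹ * r * z) := fun w => by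
  have h := congrArg (tensorAct z) (hr (z * w * z⁻¹))
  rw [map_one, tensorAct_tmul] at h
  rw [← h]
  congr 1
  · simp only [rcomm]; group
  · group

/-- Linearization of the defining identity: expand `[r, xy] ⊗ xy = 1`. -/
theorem tensorAct_mul_tensorAct_eq_one (x y : G) :
    tensorAct (rcomm r x * y) (tmul (rcomm r y) x) *
      tensorAct (x * y) (tmul (rcomm r x) y) = 1 := by
  have h := hr (x * y)
  have hconj : tmul (y⁻¹ * rcomm r x * y) y = tensorAct y (tmul (rcomm r x) y) := by
    rw [tensorAct_tmul]; congr 1; group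
  rw [show rcomm r (x * y) = rcomm r y * (y⁻¹ * rcomm r x * y) by simp only [rcomm]; group,
    tmul_mul_left, tmul_mul_right (rcomm r y), hr y, one_mul, tensorAct_tensorAct,
    show x * y = y * (y⁻¹ * x * y) by group, tmul_mul_right, ← tensorAct_tmul, hr x, map_one,
    one_mul, hconj, tensorAct_tensorAct, show y * (y⁻¹ * x * y) = x * y by group,
    show y * (y⁻¹ * rcomm r x * y) = rcomm r x * y by group] at h
  exact h

end IsRightTensor2Engel

section TensorEngelSubgroup

variable {R : Subgroup G} [R.Normal] (hR : ∀ g ∈ R, IsRightTensor2Engel g) {a b : G}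
  (ha : a ∈ R) (hb : b ∈ R)
include hR ha hb

theorem commute_rcomm_rcomm_of_tensor (x z : G) : Commute (rcomm (rcomm a b) x) z :=
  commute_rcomm_rcomm_of_mem (fun g hg => (hR g hg).isRight2Engel) ha hb x z

theorem commute_tmul_rcomm_rcomm (x y : G) (t : TensorSquare G) :
    Commute (tmul (rcomm (rcomm a b) x) y) t :=
  commute_tmul_of_commute (commute_rcomm_rcomm_of_tensor hR ha hb x y) t

theorem commute_tmul_rcomm (y : G) (t : TensorSquare G) : Commute (tmul (rcomm a b) y) t :=
  commute_tmul_of_forall_commute (commute_rcomm_rcomm_of_tensor hR ha hb y) t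

theorem tensorAct_rcomm_rcomm (x : G) (t : TensorSquare G) :
    tensorAct (rcomm (rcomm a b) x) t = t :=
  tensorAct_of_forall_commute (commute_rcomm_rcomm_of_tensor hR ha hb x) t

omit hb in
theorem tmul_rcomm_rcomm_rcomm_eq_one (x z w : G) : tmul (rcomm (rcomm a b) x) (rcomm z w) = 1 := by
  have h := (hR _ (rcomm_mem ha b)).tensorAct_mul_tensorAct_eq_one x (rcomm z w)
  rwa [rcomm_eq_one_iff.mpr ((hR a ha).isRight2Engel.commute_rcomm_rcomm b z w), tmul_one_left,
    map_one, one_mul, tensorAct_eq_one_iff] at h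

theorem tensorAct_tmul_rcomm_rcomm (w x y : G) :
    tensorAct w (tmul (rcomm (rcomm a b) x) y) = tmul (rcomm (rcomm a b) x) y := by
  rw [tensorAct_tmul, (commute_rcomm_rcomm_of_tensor hR ha hb x w).symm.inv_mul_cancel,
    show w⁻¹ * y * w = y * rcomm y w by simp only [rcomm]; group,
    tmul_mul_rcomm_of_commute (commute_tmul_rcomm_rcomm hR ha hb x y _),
    tmul_rcomm_rcomm_rcomm_eq_one hR ha, one_mul]

theorem tmul_rcomm_rcomm_mul_tmul_swap (x y : G) :
    tmul (rcomm (rcomm a b) x) y * tmul (rcomm (rcomm a b) y) x = 1 := by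
  have h := (hR _ (rcomm_mem ha b)).tensorAct_mul_tensorAct_eq_one x y
  rwa [tensorAct_tmul_rcomm_rcomm hR ha hb, tensorAct_tmul_rcomm_rcomm hR ha hb,
    (commute_tmul_rcomm_rcomm hR ha hb y x _).eq] at h

theorem tmul_rcomm_rcomm_pow_three (x y : G) : tmul (rcomm (rcomm a b) x) y ^ 3 = 1 := by
  rw [← tmul_pow_left_of_forall_commute (commute_rcomm_rcomm_of_tensor hR ha hb x),
    rcomm_rcomm_pow_three (fun g hg => (hR g hg).isRight2Engel) ha hb, tmul_one_left]

theorem tmul_rcomm_mul (z z' : G) : tmul (rcomm a b) (z * z') =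
    tmul (rcomm a b) z' * (tmul (rcomm a b) (rcomm z z') * tmul (rcomm a b) z *
      tmul (rcomm (rcomm a b) z') z) := by
  rw [tmul_mul_right, tensorAct_tmul,
    show z'⁻¹ * rcomm a b * z' = rcomm a b * rcomm (rcomm a b) z' by simp only [rcomm]; group,
    show z'⁻¹ * z * z' = z * rcomm z z' by simp only [rcomm]; group, tmul_mul_left,
    tensorAct_rcomm_rcomm hR ha hb, tmul_mul_rcomm_of_commute (commute_tmul_rcomm hR ha hb z _),
    tmul_mul_rcomm_of_commute (commute_tmul_rcomm_rcomm hR ha hb z' z _),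
    tmul_rcomm_rcomm_rcomm_eq_one hR ha, one_mul]

theorem tmul_rcomm_mul_comm (z z' : G) :
    tmul (rcomm a b) (z * z') = tmul (rcomm a b) (rcomm z z') * tmul (rcomm a b) (z' * z) := by
  rw [show z * z' = z' * z * rcomm z z' by simp only [rcomm]; group, tmul_mul_right,
    tensorAct_rcomm, (commute_tmul_rcomm hR ha hb _ _).symm.inv_mul_cancel]

theorem tmul_rcomm_rcomm_flip (z z' : G) :
    tmul (rcomm a b) (rcomm z' z) = (tmul (rcomm a b) (rcomm z z'))⁻¹ := by
  rw [← inv_rcomm z z', tmul_inv_right, inv_rcomm, tensorAct_rcomm,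
    (commute_tmul_rcomm hR ha hb _ _).symm.inv_mul_cancel]

theorem tmul_rcomm_rcomm_eq_sq (z z' : G) :
    tmul (rcomm a b) (rcomm z z') = tmul (rcomm (rcomm a b) z) z' ^ 2 := by
  have h := (tmul_rcomm_mul hR ha hb z z').symm.trans ((tmul_rcomm_mul_comm hR ha hb z z').trans
    (congrArg (tmul (rcomm a b) (rcomm z z') * ·) (tmul_rcomm_mul hR ha hb z' z)))
  rw [tmul_rcomm_rcomm_flip hR ha hb z z', eq_inv_of_mul_eq_one_right
    (tmul_rcomm_rcomm_mul_tmul_swap hR ha hb z z')] at h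
  set K := tmul (rcomm a b) (rcomm z z')
  set P := tmul (rcomm (rcomm a b) z) z'
  set A := tmul (rcomm a b) z'
  set B := tmul (rcomm a b) z
  have hKB : Commute K B := commute_tmul_rcomm hR ha hb _ _
  have hAB : Commute A B := commute_tmul_rcomm hR ha hb _ _
  rw [hKB.eq, show K * (B * (K⁻¹ * A * P)) = K * B * K⁻¹ * A * P by group, hKB.mul_inv_cancel,
    ← hAB.eq, show A * (B * K * P⁻¹) = A * B * (K * P⁻¹) by group,
    mul_right_inj] at h
  rw [sq, ← mul_inv_eq_iff_eq_mul, h]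

theorem tmul_rcomm_rcomm_comm (z z' : G) :
    tmul (rcomm (rcomm a z) z') b = tmul (rcomm (rcomm a b) z) z' := by
  have hE := commute_rcomm_rcomm_of_tensor hR ha hb z
  have h := (hR _ (rcomm_mem ha z)).tensorAct_mul_tensorAct_eq_one b z'
  rwa [(hR a ha).isRight2Engel.rcomm_rcomm_eq_inv (hR _ (rcomm_mem ha z)).isRight2Engel b,
    tmul_inv_left_of_forall_commute hE, map_inv, tensorAct_tmul_rcomm_rcomm hR ha hb,
    ← tensorAct_tensorAct, tensorAct_of_forall_commute fun w => (hE w).inv_left,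
    ← tensorAct_tmul_rcomm_rcomm hR ha hb z' z z', ← map_inv, ← map_mul, tensorAct_eq_one_iff,
    mul_inv_eq_one] at h

theorem tmul_rcomm_rcomm_eq_one (z z' : G) : tmul (rcomm (rcomm a b) z) z' = 1 := by
  set ψ := tmul (rcomm (rcomm a b) z) z'
  have hψ : tmul (rcomm a (rcomm z z')) b = ψ ^ 2 := by
    rw [(hR a ha).isRight2Engel.rcomm_rcomm_eq_mul_self (hR _ (rcomm_mem ha z)).isRight2Engel,
      tmul_mul_left, tensorAct_rcomm, tmul_rcomm_rcomm_comm hR ha hb,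
      (commute_tmul_rcomm_rcomm hR ha hb z z' _).symm.inv_mul_cancel, sq]
  have h := (hR a ha).tensorAct_mul_tensorAct_eq_one b (rcomm z z')
  rw [hψ, tmul_rcomm_rcomm_eq_sq hR ha hb, map_pow, map_pow, tensorAct_tmul_rcomm_rcomm hR ha hb,
    tensorAct_tmul_rcomm_rcomm hR ha hb] at h
  calc ψ = ψ ^ 2 * ψ ^ 2 * (ψ ^ 3)⁻¹ := by group
    _ = 1 := by rw [h, tmul_rcomm_rcomm_pow_three hR ha hb, inv_one, mul_one]

end TensorEngelSubgroup

theorem stmt_19_general (G : Type*) [Group G]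
    (R Z : Subgroup G)
    (hR : (R : Set G) = {g : G | ∀ x : G, tmul (g⁻¹ * x⁻¹ * g * x) x = 1})
    (hZ : (Z : Set G) = {a : G | ∀ g h : G, tmul (a⁻¹ * g⁻¹ * a * g) h = 1}) :
    ⁅R, R⁆ ≤ Z ∧ ∀ g ∈ R, ∀ h ∈ R, g⁻¹ * h⁻¹ * g * h ∈ Z := by
  have hmem (g : G) : g ∈ R ↔ IsRightTensor2Engel g := by rw [← SetLike.mem_coe, hR]; rfl
  have : R.Normal := ⟨fun n hn g => (hmem _).mpr (by simpa using ((hmem n).mp hn).conj g⁻¹)⟩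
  have hRZ (g : G) (hg : g ∈ R) (h : G) (hh : h ∈ R) : rcomm g h ∈ Z := by
    rw [← SetLike.mem_coe, hZ]
    exact tmul_rcomm_rcomm_eq_one (fun g => (hmem g).mp) hg hh
  refine ⟨Subgroup.commutator_le.mpr fun g hg h hh => ?_, hRZ⟩
  simpa [rcomm, commutatorElement_def] using hRZ g⁻¹ (R.inv_mem hg) h⁻¹ (R.inv_mem hh)

/-- If `x ⊗ x = 1` for all `x ∈ G`, then the derived subgroup of `R₂⊗(G)` is contained
in `Z₂⊗(G)`; in particular every commutator `[g, h]` of elements `g, h ∈ R₂⊗(G)` lies in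
`Z₂⊗(G)`. Here `R` is the subgroup `R₂⊗(G)` and `Z` is the subgroup `Z₂⊗(G)`. -/
theorem stmt_19 (G : Type*) [Group G] (hsq : ∀ x : G, tmul x x = 1)
    (R Z : Subgroup G)
    (hR : (R : Set G) = {g : G | ∀ x : G, tmul (g⁻¹ * x⁻¹ * g * x) x = 1})
    (hZ : (Z : Set G) = {a : G | ∀ g h : G, tmul (a⁻¹ * g⁻¹ * a * g) h = 1}) :
    ⁅R, R⁆ ≤ Z ∧ ∀ g ∈ R, ∀ h ∈ R, g⁻¹ * h⁻¹ * g * h ∈ Z :=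
  stmt_19_general G R Z hR hZ
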